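/- arXiv:1507.03055 — 5 statements merged into one kernel-verified Lean document; each statement's English description precedes it below -/
import Mathlib

section
/- For every nonnegative integer n, Σ_{k=0}^n C(n,k)(-1)^{n+1} (E_k(1/2) - (1/2)^k) = (-1)^n (E_n(1/2) + (3^n - 2)/2^n). -/
open Finset

/-- Bernoulli polynomials evaluated at a real number. -/
noncomputable def bernoulliPoly (n : ℕ) (x : ℝ) : ℝ :=
  ((Polynomial.bernoulli n).map (algebraMap ℚ ℝ)).eval x

/-- Euler polynomials `E_n(x)` defined via `2 e^{xt}/(e^t+1) = ∑ E_n(x) t^n/n!`. -/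
noncomputable def eulerPoly (n : ℕ) (x : ℝ) : ℝ :=
  (n.factorial : ℝ) * PowerSeries.coeff n
    (2 * PowerSeries.mk (fun k => x ^ k / (k.factorial : ℝ)) * (PowerSeries.exp ℝ + 1)⁻¹)

/-!
The Appell property `E_n(x + 1) = ∑ C(n,k) E_k(x)` together with the functional equation
`E_n(x + 1) + E_n(x) = 2 x^n`, both read off from the generating function, give
`∑ C(n,k) E_k(x) = 2 x^n - E_n(x)`. At `x = 1/2`, and with `∑ C(n,k) 2^{-k} = (3/2)^n`,
the identity is a rearrangement.
-/

open PowerSeries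

lemma mk_pow_div_factorial_eq_rescale_exp (x : ℝ) :
    PowerSeries.mk (fun k => x ^ k / (k.factorial : ℝ)) = rescale x (exp ℝ) := by
  ext n
  simp [coeff_rescale, coeff_exp, div_eq_mul_inv]

lemma eulerPoly_eq_factorial_mul_coeff (n : ℕ) (x : ℝ) :
    eulerPoly n x = n.factorial * coeff n (2 * rescale x (exp ℝ) * (exp ℝ + 1)⁻¹) := by
  rw [eulerPoly, mk_pow_div_factorial_eq_rescale_exp]

lemma eulerPoly_add (n : ℕ) (x y : ℝ) :
    eulerPoly n (x + y) =
      ∑ k ∈ range (n + 1), (n.choose k : ℝ) * eulerPoly k x * y ^ (n - k) := by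
  have hgen : 2 * rescale (x + y) (exp ℝ) * (exp ℝ + 1)⁻¹ =
      (2 * rescale x (exp ℝ) * (exp ℝ + 1)⁻¹) * rescale y (exp ℝ) := by
    rw [← exp_mul_exp_eq_exp_add]; ring
  simp only [eulerPoly_eq_factorial_mul_coeff]
  rw [hgen, coeff_mul, Nat.sum_antidiagonal_eq_sum_range_succ_mk, mul_sum]
  refine sum_congr rfl fun k hk => ?_
  have hkn : k ≤ n := Nat.lt_succ_iff.mp (mem_range.mp hk)
  rw [coeff_rescale, coeff_exp, Nat.cast_choose ℝ hkn]
  have : ((n - k).factorial : ℝ) ≠ 0 := by positivity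
  simp only [one_div, map_inv₀, map_natCast]
  field_simp

lemma eulerPoly_add_one_add_eulerPoly (n : ℕ) (x : ℝ) :
    eulerPoly n (x + 1) + eulerPoly n x = 2 * x ^ n := by
  have hunit : constantCoeff (exp ℝ + 1 : ℝ⟦X⟧) ≠ 0 := by simp [constantCoeff_exp]
  have hgen : 2 * rescale (x + 1) (exp ℝ) * (exp ℝ + 1)⁻¹ +
      2 * rescale x (exp ℝ) * (exp ℝ + 1)⁻¹ = C (2 : ℝ) * rescale x (exp ℝ) := by
    rw [← exp_mul_exp_eq_exp_add, rescale_one, RingHom.id_apply, map_ofNat]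
    linear_combination (2 * rescale x (exp ℝ)) * PowerSeries.mul_inv_cancel _ hunit
  rw [eulerPoly_eq_factorial_mul_coeff, eulerPoly_eq_factorial_mul_coeff, ← mul_add, ← map_add,
    hgen, coeff_C_mul, coeff_rescale, coeff_exp]
  have : (n.factorial : ℝ) ≠ 0 := by positivity
  simp only [one_div, map_inv₀, map_natCast]
  field_simp

lemma sum_choose_mul_eulerPoly (n : ℕ) (x : ℝ) :
    ∑ k ∈ range (n + 1), (n.choose k : ℝ) * eulerPoly k x = 2 * x ^ n - eulerPoly n x := by
  have h := eulerPoly_add n x 1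
  simp only [one_pow, mul_one] at h
  linarith [eulerPoly_add_one_add_eulerPoly n x]

theorem stmt9 (n : ℕ) :
    ∑ k ∈ Finset.range (n + 1),
        (n.choose k : ℝ) * (-1) ^ (n + 1) * (eulerPoly k (1 / 2) - (1 / 2) ^ k) =
      (-1) ^ n * (eulerPoly n (1 / 2) + (3 ^ n - 2) / 2 ^ n) := by
  have hbinom : ∑ k ∈ range (n + 1), (n.choose k : ℝ) * (1 / 2) ^ k = 3 ^ n / 2 ^ n := by
    rw [← div_pow, show (3 / 2 : ℝ) = 1 / 2 + 1 by norm_num, add_pow]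
    exact sum_congr rfl fun k _ => by ring
  have hsplit : ∀ k ∈ range (n + 1),
      (n.choose k : ℝ) * (-1) ^ (n + 1) * (eulerPoly k (1 / 2) - (1 / 2) ^ k) =
        (-1) ^ (n + 1) * ((n.choose k : ℝ) * eulerPoly k (1 / 2)) -
          (-1) ^ (n + 1) * ((n.choose k : ℝ) * (1 / 2) ^ k) := fun k _ => by ring
  rw [sum_congr rfl hsplit, sum_sub_distrib, ← mul_sum, ← mul_sum, sum_choose_mul_eulerPoly,
    hbinom, one_div_pow]
  field_simp
  ring
end

section
/- Let a: ℕ → ℝ be a sequence with exponential generating function a*(x) = Σ_{n≥0} a_n x^n/n! (as a formal power series). Then a_n = Σ_{k=0}^n C(n,k)(-1)^n a_k for all n if and only if a*(x)e^{x/2} is an even formal power series. -/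
open Finset

/-!
Since `e^{x/2} e^{-x/2} = 1` and `(e^{x/2})^2 = e^x`, the series `a*(x) e^{x/2}` is even exactly
when `a*(-x) = a*(x) e^x`. Comparing coefficients of `x^n`, the left side gives `(-1)^n a_n / n!`
and the right side the binomial convolution `∑ C(n,k) a_k / n!`.
-/

open PowerSeries

section

variable {A : Type*} [CommRing A] [Algebra ℚ A]

theorem rescale_exp_mul_rescale_neg_exp (c : A) :
    rescale c (exp A) * rescale (-c) (exp A) = 1 := by
  have h := congrArg (rescale c) (exp_mul_exp_neg_eq_one (A := A))
  rwa [map_mul, map_one, evalNegHom, rescale_rescale, neg_one_mul] at h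

theorem rescale_exp_sq (c : A) : rescale c (exp A) ^ 2 = rescale (2 * c) (exp A) := by
  rw [← map_pow, exp_pow_eq_rescale_exp, rescale_rescale, Nat.cast_ofNat, mul_comm]

theorem rescale_neg_one_mul_rescale_exp_eq_iff (f : A⟦X⟧) (c : A) :
    rescale (-1) (f * rescale c (exp A)) = f * rescale c (exp A) ↔
      rescale (-1) f = f * rescale (2 * c) (exp A) := by
  set u := rescale c (exp A)
  have huv : u * rescale (-c) (exp A) = 1 := rescale_exp_mul_rescale_neg_exp c
  rw [map_mul, rescale_rescale, mul_neg_one, ← rescale_exp_sq, sq, ← mul_assoc]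
  constructor
  · intro h
    calc rescale (-1) f = rescale (-1) f * rescale (-c) (exp A) * u := by
          rw [mul_assoc, mul_comm _ u, huv, mul_one]
      _ = f * u * u := by rw [h]
  · intro h
    rw [h, mul_assoc _ u, huv, mul_one]

end

section

variable {K : Type*} [Field K] [CharZero K]

noncomputable def egf (a : ℕ → K) : K⟦X⟧ := mk fun n => a n / n.factorial

theorem coeff_egf_mul_exp (a : ℕ → K) (n : ℕ) :
    coeff n (egf a * exp K) = (∑ k ∈ range (n + 1), (n.choose k : K) * a k) / n.factorial := by
  rw [coeff_mul, Nat.sum_antidiagonal_eq_sum_range_succ_mk, sum_div]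
  refine sum_congr rfl fun k hk => ?_
  rw [egf, coeff_mk, coeff_exp, Nat.cast_choose K (Nat.lt_succ_iff.mp (mem_range.mp hk))]
  simp only [one_div, map_inv₀, map_natCast]
  field_simp
  exact (mul_div_mul_right _ _ (Nat.cast_ne_zero.mpr n.factorial_ne_zero)).symm

end

theorem neg_one_pow_mul_eq_iff_eq_neg_one_pow_mul {R : Type*} [Ring R] (n : ℕ) (x y : R) :
    (-1) ^ n * x = y ↔ x = (-1) ^ n * y := by
  rcases neg_one_pow_eq_or R n with h | h <;> simp [h, neg_eq_iff_eq_neg]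

theorem stmt13 (a : ℕ → ℝ) :
    (∀ n, a n = ∑ k ∈ Finset.range (n + 1), (n.choose k : ℝ) * (-1) ^ n * a k) ↔
      PowerSeries.rescale (-1 : ℝ)
          (PowerSeries.mk (fun n => a n / (n.factorial : ℝ)) *
            PowerSeries.rescale (1 / 2 : ℝ) (PowerSeries.exp ℝ)) =
        PowerSeries.mk (fun n => a n / (n.factorial : ℝ)) *
          PowerSeries.rescale (1 / 2 : ℝ) (PowerSeries.exp ℝ) := by
  rw [rescale_neg_one_mul_rescale_exp_eq_iff, mul_one_div_cancel two_ne_zero, rescale_one,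
    RingHom.id_apply, PowerSeries.ext_iff]
  refine forall_congr' fun n => ?_
  rw [← egf, coeff_egf_mul_exp, coeff_rescale, egf, coeff_mk, ← mul_div_assoc,
    div_left_inj' (Nat.cast_ne_zero.mpr n.factorial_ne_zero),
    neg_one_pow_mul_eq_iff_eq_neg_one_pow_mul, mul_sum]
  simp only [mul_assoc, mul_left_comm ((-1 : ℝ) ^ n)]
end

section
/- Suppose a: ℕ → ℝ satisfies a_n = Σ_{k=0}^n C(n,k)(-1)^n a_k for all n (self-dual with respect to D₃). Then for any function f: ℕ → ℝ and all n ≥ 0, Σ_{k=0}^n C(n,k) (f(k) - Σ_{j=0}^k (-1)^{n-j} C(k,j) f(j)) a_{n-k} = 0. -/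
open Finset

/-!
Write `T g k = ∑ⱼ C(k,j) g j` for the binomial transform and `⋆` for binomial convolution.
Both `(T g) ⋆ h` and `g ⋆ (T h)` are the triple convolution of `g`, the constant sequence `1`
and `h`, so they agree. Self-duality of `a` says `T a m = (-1)^m a m`. Taking
`g j = (-1)^(n-j) f j`, the subtracted part of the sum becomes
`∑ⱼ C(n,j) (-1)^(n-j) f j · (-1)^(n-j) a (n-j) = ∑ⱼ C(n,j) f j a (n-j)`,
which is exactly the first part.
-/

section BinomialTransform

variable {R : Type*}

lemma neg_one_pow_mul_neg_one_pow [Monoid R] [HasDistribNeg R] (m : ℕ) :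
    (-1 : R) ^ m * (-1) ^ m = 1 := by
  rw [← pow_add, ← two_mul, pow_mul, neg_one_sq, one_pow]

def binomialTransform [Semiring R] (g : ℕ → R) (k : ℕ) : R :=
  ∑ j ∈ range (k + 1), (k.choose j : R) * g j

lemma binomialTransform_eq_sum_reflect [Semiring R] (g : ℕ → R) (m : ℕ) :
    ∑ i ∈ range (m + 1), (m.choose i : R) * g (m - i) = binomialTransform g m := by
  rw [binomialTransform, ← sum_range_reflect]
  refine sum_congr rfl fun i hi => ?_
  have him : i ≤ m := Nat.lt_succ_iff.mp (mem_range.mp hi)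
  rw [Nat.add_sub_cancel, Nat.choose_symm him, Nat.sub_sub_self him]

lemma sum_choose_mul_binomialTransform_mul [CommSemiring R] (g h : ℕ → R) (n : ℕ) :
    ∑ k ∈ range (n + 1), (n.choose k : R) * binomialTransform g k * h (n - k) =
      ∑ j ∈ range (n + 1), (n.choose j : R) * g j * binomialTransform h (n - j) := by
  have hterm : ∀ k ∈ range (n + 1), (n.choose k : R) * binomialTransform g k * h (n - k) =
      ∑ j ∈ range (k + 1),
        (n.choose j : R) * g j * ((n - j).choose (k - j) * h (n - j - (k - j))) := by
    intro k hk
    rw [binomialTransform, mul_sum, sum_mul]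
    refine sum_congr rfl fun j hj => ?_
    have hjk : j ≤ k := Nat.lt_succ_iff.mp (mem_range.mp hj)
    have hkn : k ≤ n := Nat.lt_succ_iff.mp (mem_range.mp hk)
    have hchoose : (n.choose k : R) * k.choose j = n.choose j * (n - j).choose (k - j) := by
      rw [← Nat.cast_mul, ← Nat.cast_mul, Nat.choose_mul hjk]
    rw [show n - j - (k - j) = n - k by omega]
    calc (n.choose k : R) * ((k.choose j) * g j) * h (n - k)
        = (n.choose k * k.choose j) * g j * h (n - k) := by ring
      _ = _ := by rw [hchoose]; ring
  rw [sum_congr rfl hterm]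
  refine (sum_range_diag_flip (n + 1)
    fun j i => (n.choose j : R) * g j * ((n - j).choose i * h (n - j - i))).trans ?_
  refine sum_congr rfl fun j hj => ?_
  rw [← binomialTransform_eq_sum_reflect, mul_sum,
    show n + 1 - j = n - j + 1 by have := mem_range.mp hj; omega]

lemma binomialTransform_eq_neg_one_pow_mul [CommRing R] {a : ℕ → R}
    (ha : ∀ n, a n = ∑ k ∈ range (n + 1), (n.choose k : R) * (-1) ^ n * a k) (m : ℕ) :
    binomialTransform a m = (-1) ^ m * a m := by
  have hself : a m = (-1) ^ m * binomialTransform a m := by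
    rw [ha m, binomialTransform, mul_sum]
    exact sum_congr rfl fun i _ => by ring
  rw [hself, ← mul_assoc, neg_one_pow_mul_neg_one_pow, one_mul]

end BinomialTransform

theorem stmt15 (a : ℕ → ℝ)
    (ha : ∀ n, a n = ∑ k ∈ Finset.range (n + 1), (n.choose k : ℝ) * (-1) ^ n * a k)
    (f : ℕ → ℝ) (n : ℕ) :
    ∑ k ∈ Finset.range (n + 1), (n.choose k : ℝ) *
        (f k - ∑ j ∈ Finset.range (k + 1), (-1) ^ (n - j) * (k.choose j : ℝ) * f j) *
        a (n - k) = 0 := by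
  set g : ℕ → ℝ := fun j => (-1) ^ (n - j) * f j
  have hinner : ∀ k, ∑ j ∈ range (k + 1), (-1) ^ (n - j) * (k.choose j : ℝ) * f j =
      binomialTransform g k :=
    fun k => sum_congr rfl fun j _ => by ring
  simp_rw [hinner, mul_sub, sub_mul, sum_sub_distrib, sum_choose_mul_binomialTransform_mul,
    binomialTransform_eq_neg_one_pow_mul ha, sub_eq_zero]
  refine sum_congr rfl fun j _ => ?_
  linear_combination (-(n.choose j : ℝ) * f j * a (n - j)) * neg_one_pow_mul_neg_one_pow (R := ℝ) (n - j)
end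

section
/- Let k, ℓ be nonnegative integers and x, y, z real numbers with x + y + z = 1. Then (-1)^{ℓ+1} Σ_{j=0}^k x^{k-j} C(k,j) B_{ℓ+j+1}(y)/(ℓ+j+1) + (-1)^{k+1} Σ_{j=0}^ℓ x^{ℓ-j} C(ℓ,j) B_{k+j+1}(z)/(k+j+1) = x^{k+ℓ+1} / ((k+ℓ+1) C(k+ℓ, k)). -/
open Finset

open Polynomial
open scoped Nat

/-!
Fix `x` and put `z = 1 - x - y`. The left-hand side is then a polynomial in `y`, and it is
`1`-periodic: `B_{n+1}(y + 1) - B_{n+1}(y) = (n + 1) y ^ n`, so shifting `y` by `1` (and `z` by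
`-1`) adds `(-1)^(l+1) y^l (x + y)^k` to the first half and its negative to the second. Hence it
is constant and equals its integral over `y ∈ [0, 1]`. The first half integrates to `0`; the
second becomes an integral over `[-x, 1 - x]`, which gives powers of `-x` and leaves
`x^(k+l+1) ∑ⱼ (-1)^j C(l,j) / (k+j+1)`, a Beta integral.
-/

theorem bernoulliFun_add_one_div (n : ℕ) (a : ℝ) :
    bernoulliFun (n + 1) (a + 1) / (n + 1) = bernoulliFun (n + 1) a / (n + 1) + a ^ n := by
  have h : bernoulliFun (n + 1) (1 + a) = bernoulliFun (n + 1) a + (n + 1) * a ^ n := by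
    simpa [bernoulliFun, aeval_comp] using congr_arg (·.aeval a) (bernoulli_comp_one_add_X (n + 1))
  rw [add_comm a, h]
  field_simp

theorem integral_bernoulliFun_add_one (n : ℕ) (a : ℝ) :
    ∫ t in a..a + 1, bernoulliFun n t = a ^ n := by
  rw [intervalIntegral.integral_eq_sub_of_hasDerivAt (fun t _ => antideriv_bernoulliFun n t)
    (intervalIntegrable_bernoulliFun n _ _), bernoulliFun_add_one_div]
  ring

theorem sum_pow_mul_choose_mul_pow {R : Type*} [CommSemiring R] (n m : ℕ) (u v : R) :
    ∑ j ∈ range (n + 1), v ^ (n - j) * (n.choose j : R) * u ^ (m + j) =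
      u ^ m * (u + v) ^ n := by
  rw [add_pow, mul_sum]
  refine sum_congr rfl fun j _ => ?_
  ring

-- The sum is `∫₀¹ t^k (1 - t)^l dt`. Writing `s k l` for it, Pascal's rule gives
-- `s k (l + 1) = s k l - s (k + 1) l`, which the factorial form satisfies.
theorem sum_choose_mul_neg_one_pow_div {K : Type*} [Field K] [CharZero K] (k l : ℕ) :
    ∑ j ∈ range (l + 1), (l.choose j : K) * ((-1) ^ j / (k + j + 1)) =
      1 / ((k + l + 1) * (k + l).choose k) := by
  suffices h : ∀ k : ℕ, ∑ j ∈ range (l + 1), (l.choose j : K) * ((-1) ^ j / (k + j + 1)) =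
      k ! * l ! / (k + l + 1)! by
    rw [h, Nat.factorial_succ, ← Nat.add_choose_mul_factorial_mul_factorial,
      ← Nat.choose_symm_add]
    have := Nat.factorial_ne_zero k
    have := Nat.factorial_ne_zero l
    push_cast
    field_simp
  induction l with
  | zero =>
    intro k
    have := Nat.factorial_ne_zero k
    simp only [zero_add, sum_range_one, Nat.choose_self, pow_zero, Nat.cast_zero,
      add_zero, Nat.factorial_zero, Nat.factorial_succ k, Nat.cast_mul, Nat.cast_succ]
    field_simp
  | succ l ih =>
    intro k
    have shift : ∀ j ∈ range (l + 1),
        (l.choose j : K) * ((-1) ^ (j + 1) / (k + ((j + 1 : ℕ) : K) + 1)) =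
          -((l.choose j : K) * ((-1) ^ j / (((k + 1 : ℕ) : K) + j + 1))) := by
      intro j _
      push_cast
      ring
    rw [sum_choose_succ_mul (fun j _ => (-1 : K) ^ j / (k + j + 1)), sum_congr rfl shift,
      sum_neg_distrib, ih, ih, show k + 1 + l + 1 = k + l + 1 + 1 by ring,
      show k + (l + 1) + 1 = k + l + 1 + 1 by ring]
    have h₁ : ((k + l + 1)! : K) ≠ 0 := Nat.cast_ne_zero.2 (Nat.factorial_ne_zero _)
    have h₂ : ((k + l + 1 + 1 : ℕ) : K) ≠ 0 := Nat.cast_ne_zero.2 (Nat.succ_ne_zero _)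
    simp only [Nat.factorial_succ (k + l + 1), Nat.factorial_succ k, Nat.factorial_succ l]
    push_cast at h₂ ⊢
    field_simp
    ring

theorem Function.Periodic.eq_of_eq_eval {R : Type*} [CommRing R] [IsDomain R] [CharZero R]
    {f : R → R} {c : R} (hf : Function.Periodic f c) (hc : c ≠ 0) {P : R[X]}
    (hP : ∀ y, f y = P.eval y) (y t : R) : f y = f t := by
  suffices P = C (P.eval 0) by rw [hP, hP, this, eval_C, eval_C]
  refine eq_of_infinite_eval_eq _ _ (Set.infinite_of_injective_forall_mem
    (f := fun n : ℕ => (n : R) * c) (fun m n h => ?_) fun n => ?_)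
  · exact_mod_cast mul_right_cancel₀ hc h
  · simpa [← hP] using hf.nat_mul_eq n

-- The left-hand side of the theorem is
-- `bernoulliBinomialSum k l x y + bernoulliBinomialSum l k x z`.
noncomputable def bernoulliBinomialSum (k l : ℕ) (x y : ℝ) : ℝ :=
  (-1) ^ (l + 1) * ∑ j ∈ range (k + 1),
    x ^ (k - j) * (k.choose j : ℝ) * bernoulliFun (l + j + 1) y / (l + j + 1)

@[fun_prop]
theorem continuous_bernoulliBinomialSum (k l : ℕ) (x : ℝ) :
    Continuous (bernoulliBinomialSum k l x) := by
  unfold bernoulliBinomialSum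
  fun_prop

theorem bernoulliBinomialSum_add_one (k l : ℕ) (x y : ℝ) :
    bernoulliBinomialSum k l x (y + 1) =
      bernoulliBinomialSum k l x y + (-1) ^ (l + 1) * (y ^ l * (y + x) ^ k) := by
  have step : ∀ j ∈ range (k + 1),
      x ^ (k - j) * (k.choose j : ℝ) * bernoulliFun (l + j + 1) (y + 1) / (l + j + 1) =
        x ^ (k - j) * (k.choose j : ℝ) * bernoulliFun (l + j + 1) y / (l + j + 1) +
          x ^ (k - j) * (k.choose j : ℝ) * y ^ (l + j) := by
    intro j _
    have h := bernoulliFun_add_one_div (l + j) y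
    push_cast at h
    rw [mul_div_assoc, h, mul_div_assoc]
    ring
  rw [bernoulliBinomialSum, bernoulliBinomialSum, sum_congr rfl step, sum_add_distrib,
    sum_pow_mul_choose_mul_pow, mul_add]

theorem integral_bernoulliBinomialSum (k l : ℕ) (x a : ℝ) :
    ∫ t in a..a + 1, bernoulliBinomialSum k l x t =
      (-1) ^ (l + 1) * ∑ j ∈ range (k + 1),
        x ^ (k - j) * (k.choose j : ℝ) * a ^ (l + j + 1) / (l + j + 1) := by
  have term : ∀ j ∈ range (k + 1),
      ∫ t in a..a + 1,
          x ^ (k - j) * (k.choose j : ℝ) * bernoulliFun (l + j + 1) t / (l + j + 1) =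
        x ^ (k - j) * (k.choose j : ℝ) * a ^ (l + j + 1) / (l + j + 1) := by
    intro j _
    rw [intervalIntegral.integral_div, intervalIntegral.integral_const_mul,
      integral_bernoulliFun_add_one]
  rw [← sum_congr rfl term, ← intervalIntegral.integral_finsetSum,
    ← intervalIntegral.integral_const_mul]
  · rfl
  · intro j _
    apply Continuous.intervalIntegrable
    fun_prop

theorem exists_eval_eq_bernoulliBinomialSum (k l : ℕ) (x : ℝ) :
    ∃ P : ℝ[X], ∀ y, bernoulliBinomialSum k l x y = P.eval y :=
  ⟨C ((-1) ^ (l + 1)) * ∑ j ∈ range (k + 1),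
      C (x ^ (k - j) * (k.choose j : ℝ) / (l + j + 1)) *
        (Polynomial.bernoulli (l + j + 1)).map (algebraMap ℚ ℝ),
    fun y => by simp [bernoulliBinomialSum, bernoulliFun, eval_finsetSum, mul_div_right_comm]⟩

theorem periodic_bernoulliBinomialSum_add_reflect (k l : ℕ) (x : ℝ) :
    Function.Periodic
      (fun y => bernoulliBinomialSum k l x y + bernoulliBinomialSum l k x (1 - x - y)) 1 := by
  intro y
  have hz := bernoulliBinomialSum_add_one l k x (-x - y)
  have e₁ : (-x - y) ^ k = (-1) ^ k * (x + y) ^ k := by rw [← neg_add', neg_pow]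
  have e₂ : (-x - y + x) ^ l = (-1) ^ l * y ^ l := by rw [show -x - y + x = -y by ring, neg_pow]
  have hsign : ((-1) ^ k * (-1) ^ k : ℝ) = 1 := by rw [← mul_pow]; norm_num
  rw [show -x - y + 1 = 1 - x - y by ring, e₁, e₂] at hz
  dsimp only
  rw [show 1 - x - (y + 1) = -x - y by ring, hz, bernoulliBinomialSum_add_one]
  linear_combination (-1) ^ l * y ^ l * (x + y) ^ k * hsign

theorem integral_bernoulliBinomialSum_add_reflect (k l : ℕ) (x : ℝ) :
    ∫ t in (0 : ℝ)..1, bernoulliBinomialSum k l x t + bernoulliBinomialSum l k x (1 - x - t) =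
      x ^ (k + l + 1) / ((k + l + 1) * ((k + l).choose k : ℝ)) := by
  have term : ∀ j ∈ range (l + 1),
      (-1) ^ (k + 1) * (x ^ (l - j) * (l.choose j : ℝ) * (-x) ^ (k + j + 1) / (k + j + 1)) =
        x ^ (k + l + 1) * ((l.choose j : ℝ) * ((-1) ^ j / (k + j + 1))) := by
    intro j hj
    have hpow : x ^ (l - j) * x ^ (k + j + 1) = x ^ (k + l + 1) := by
      rw [← pow_add]
      congr 1
      have := mem_range.1 hj
      omega
    have hsign : ((-1) ^ (k + 1) * (-1) ^ (k + j + 1) : ℝ) = (-1) ^ j := by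
      rw [← pow_add, show k + 1 + (k + j + 1) = j + 2 * (k + 1) by ring, pow_add, pow_mul]
      norm_num
    rw [neg_pow, ← hpow]
    linear_combination x ^ (l - j) * x ^ (k + j + 1) * (l.choose j : ℝ) / (k + j + 1) * hsign
  have h₀ : ∫ t in (0 : ℝ)..1, bernoulliBinomialSum k l x t = 0 := by
    simpa using integral_bernoulliBinomialSum k l x 0
  rw [intervalIntegral.integral_add (Continuous.intervalIntegrable (by fun_prop) _ _)
      (Continuous.intervalIntegrable (by fun_prop) _ _),
    intervalIntegral.integral_comp_sub_left (bernoulliBinomialSum l k x),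
    show 1 - x - 1 = -x by ring, show 1 - x - 0 = -x + 1 by ring,
    h₀, zero_add, integral_bernoulliBinomialSum,
    mul_sum, sum_congr rfl term, ← mul_sum, sum_choose_mul_neg_one_pow_div, mul_one_div]

theorem bernoulliBinomialSum_add_reflect_eq (k l : ℕ) (x y t : ℝ) :
    bernoulliBinomialSum k l x y + bernoulliBinomialSum l k x (1 - x - y) =
      bernoulliBinomialSum k l x t + bernoulliBinomialSum l k x (1 - x - t) := by
  obtain ⟨P, hP⟩ := exists_eval_eq_bernoulliBinomialSum k l x
  obtain ⟨Q, hQ⟩ := exists_eval_eq_bernoulliBinomialSum l k x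
  refine (periodic_bernoulliBinomialSum_add_reflect k l x).eq_of_eq_eval one_ne_zero
    (P := P + Q.comp (C (1 - x) - X)) (fun y => ?_) y t
  simp [hP, hQ]

theorem stmt18 (k l : ℕ) (x y z : ℝ) (h : x + y + z = 1) :
    (-1) ^ (l + 1) * ∑ j ∈ Finset.range (k + 1),
        x ^ (k - j) * (k.choose j : ℝ) * bernoulliPoly (l + j + 1) y / (l + j + 1) +
      (-1) ^ (k + 1) * ∑ j ∈ Finset.range (l + 1),
        x ^ (l - j) * (l.choose j : ℝ) * bernoulliPoly (k + j + 1) z / (k + j + 1) =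
    x ^ (k + l + 1) / ((k + l + 1) * ((k + l).choose k : ℝ)) := by
  obtain rfl : z = 1 - x - y := by linarith
  -- `bernoulliPoly` is definitionally Mathlib's `bernoulliFun`.
  calc _ = bernoulliBinomialSum k l x y + bernoulliBinomialSum l k x (1 - x - y) := rfl
    _ = ∫ t in (0 : ℝ)..1,
          bernoulliBinomialSum k l x t + bernoulliBinomialSum l k x (1 - x - t) := by
      simp [← bernoulliBinomialSum_add_reflect_eq k l x y]
    _ = _ := integral_bernoulliBinomialSum_add_reflect k l x
end

section
/- Let k, ℓ be nonnegative integers and x, y, z real numbers with x + y + z = 1. Then (-1)^ℓ Σ_{j=0}^k x^{k-j} C(k,j) B_{ℓ+j}(y) = (-1)^k Σ_{j=0}^ℓ x^{ℓ-j} C(ℓ,j) B_{k+j}(z). -/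
open Finset

/-!
Umbral calculus. Let `L` be the linear functional on polynomials with `L (X ^ n) = Bₙ`, so that
`Bₙ(y) = L ((X + y) ^ n)`. By the binomial theorem the left-hand side is
`(-1) ^ l L ((X + y) ^ l (X + y + x) ^ k)`. The identity `Bₙ(1) = (-1) ^ n Bₙ` says
`L ((X + 1) ^ n) = L ((-X) ^ n)`, hence `L (p (X + 1)) = L (p (-X))` for every polynomial `p`.
For `p = (X - x - y) ^ k (X - y) ^ l` and `z = 1 - x - y` this turns the right-hand side into the
left-hand side.
-/

open Polynomial

namespace Polynomial

variable (R : Type*) [CommRing R] [Algebra ℚ R]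

noncomputable def bernoulliFunctional : R[X] →ₗ[R] R :=
  lsum fun n => algebraMap ℚ R (_root_.bernoulli n) • LinearMap.id

variable {R}

lemma bernoulliFunctional_C_mul (a : R) (p : R[X]) :
    bernoulliFunctional R (C a * p) = a * bernoulliFunctional R p := by
  rw [C_mul', map_smul, smul_eq_mul]

lemma bernoulliFunctional_X_pow (n : ℕ) :
    bernoulliFunctional R (X ^ n) = algebraMap ℚ R (_root_.bernoulli n) := by
  simp [bernoulliFunctional, ← monomial_one_right_eq_X_pow, Algebra.smul_def]

lemma bernoulliFunctional_X_add_C_pow (n : ℕ) (y : R) :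
    bernoulliFunctional R ((X + C y) ^ n) = aeval y (bernoulli n) := by
  rw [add_pow, map_sum, bernoulli, map_sum]
  refine sum_congr rfl fun i _ => ?_
  rw [← C_pow, ← C_eq_natCast, mul_assoc, ← C_mul, mul_comm (X ^ i),
    bernoulliFunctional_C_mul, bernoulliFunctional_X_pow, aeval_monomial]
  simp only [map_mul, map_natCast]
  ring

lemma bernoulliFunctional_comp_X_add_one_eq_comp_neg_X (p : R[X]) :
    bernoulliFunctional R (p.comp (X + 1)) = bernoulliFunctional R (p.comp (-X)) := by
  induction p using Polynomial.induction_on' with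
  | add p q hp hq => simp only [add_comp, map_add, hp, hq]
  | monomial n a =>
    have X_add_one_pow : bernoulliFunctional R ((X + 1) ^ n) =
        (-1) ^ n * algebraMap ℚ R (_root_.bernoulli n) := by
      rw [← C_1, bernoulliFunctional_X_add_C_pow, ← map_one (algebraMap ℚ R),
        aeval_algebraMap_apply]
      simp [bernoulli'_eq_bernoulli]
    rw [monomial_comp, monomial_comp, bernoulliFunctional_C_mul, bernoulliFunctional_C_mul,
      X_add_one_pow, neg_pow (X : R[X]), ← C_1, ← C_neg, ← C_pow, bernoulliFunctional_C_mul,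
      bernoulliFunctional_X_pow]

theorem sum_pow_mul_choose_mul_aeval_bernoulli_eq_bernoulliFunctional (k l : ℕ) (x y : R) :
    ∑ j ∈ range (k + 1), x ^ (k - j) * (k.choose j : R) * aeval y (bernoulli (l + j))
      = bernoulliFunctional R ((X + C y) ^ l * (X + C y + C x) ^ k) := by
  rw [add_pow (X + C y), mul_sum, map_sum]
  refine sum_congr rfl fun j _ => ?_
  rw [← bernoulliFunctional_X_add_C_pow, pow_add, ← bernoulliFunctional_C_mul]
  congr 1
  simp only [C_mul, C_pow, C_eq_natCast]
  ring

theorem sum_aeval_bernoulli_reciprocity (k l : ℕ) (x y z : R) (h : x + y + z = 1) :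
    (-1) ^ l * ∑ j ∈ range (k + 1),
        x ^ (k - j) * (k.choose j : R) * aeval y (bernoulli (l + j)) =
      (-1) ^ k * ∑ j ∈ range (l + 1),
        x ^ (l - j) * (l.choose j : R) * aeval z (bernoulli (k + j)) := by
  set p : R[X] := (X - C x - C y) ^ k * (X - C y) ^ l
  have reflect := bernoulliFunctional_comp_X_add_one_eq_comp_neg_X p
  have comp_X_add_one : p.comp (X + 1) = (X + C z) ^ k * (X + C z + C x) ^ l := by
    simp only [p, mul_comp, pow_comp, sub_comp, X_comp, C_comp]
    rw [show z = 1 - x - y by linear_combination h, map_sub, map_sub, map_one]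
    ring
  have comp_neg_X : p.comp (-X) =
      C ((-1) ^ (k + l)) * ((X + C y) ^ l * (X + C y + C x) ^ k) := by
    simp only [p, mul_comp, pow_comp, sub_comp, X_comp, C_comp, map_pow, map_neg, map_one]
    rw [show -X - C x - C y = -(X + C y + C x) by ring, show -X - C y = -(X + C y) by ring,
      neg_pow (X + C y + C x), neg_pow (X + C y)]
    ring
  rw [comp_X_add_one, comp_neg_X, bernoulliFunctional_C_mul] at reflect
  rw [sum_pow_mul_choose_mul_aeval_bernoulli_eq_bernoulliFunctional,
    sum_pow_mul_choose_mul_aeval_bernoulli_eq_bernoulliFunctional, reflect]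
  have sq_neg_one_pow : ((-1 : R) ^ k) ^ 2 = 1 := by rw [← pow_mul, mul_comm, pow_mul]; simp
  linear_combination
    (-(-1) ^ l * bernoulliFunctional R ((X + C y) ^ l * (X + C y + C x) ^ k)) * sq_neg_one_pow

end Polynomial

theorem stmt19 (k l : ℕ) (x y z : ℝ) (h : x + y + z = 1) :
    (-1) ^ l * ∑ j ∈ Finset.range (k + 1),
        x ^ (k - j) * (k.choose j : ℝ) * bernoulliPoly (l + j) y =
      (-1) ^ k * ∑ j ∈ Finset.range (l + 1),
        x ^ (l - j) * (l.choose j : ℝ) * bernoulliPoly (k + j) z := by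
  simpa only [bernoulliPoly, eval_map_algebraMap] using sum_aeval_bernoulli_reciprocity k l x y z h
end
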